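/- arXiv:2412.16406 — 5 statements merged into one kernel-verified Lean document; each statement's English description precedes it below -/
import Mathlib

section
/- If f and g are probability density functions on ℝ with full support such that f(x)/g(x) is strictly increasing in x (strict monotone likelihood ratio property), then the distribution with density f first-order stochastically dominates the one with density g; i.e., for every x, ∫_{-∞}^x f ≤ ∫_{-∞}^x g, with strict inequality for some x. -/
/-!
Since `f / g` is strictly increasing, `f - g` changes sign at most once, from negative to
positive. At any point `x`, either `f x ≤ g x`, and then `f < g` on all of `(-∞, x)`, which has
positive measure; or `g x < f x`, and then `g < f` on `(x, ∞)`, so `f` puts more mass than `g`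
to the right of `x` and, both having total mass one, less mass on `(-∞, x]`.
-/

open MeasureTheory Set

theorem setIntegral_pos_of_forall_pos {X : Type*} [MeasurableSpace X] {μ : Measure X}
    {s : Set X} {h : X → ℝ} (hs : MeasurableSet s) (hμs : μ s ≠ 0) (hint : IntegrableOn h s μ)
    (hpos : ∀ t ∈ s, 0 < h t) :
    0 < ∫ t in s, h t ∂μ := by
  have hnonneg : 0 ≤ᵐ[μ.restrict s] h := (ae_restrict_mem hs).mono fun t ht => (hpos t ht).le
  rw [setIntegral_pos_iff_support_of_nonneg_ae hnonneg hint]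
  exact (pos_iff_ne_zero.2 hμs).trans_le (measure_mono fun t ht => ⟨(hpos t ht).ne', ht⟩)

theorem setIntegral_lt_setIntegral_of_forall_lt {X : Type*} [MeasurableSpace X] {μ : Measure X}
    {s : Set X} {f g : X → ℝ} (hs : MeasurableSet s) (hμs : μ s ≠ 0)
    (hf : IntegrableOn f s μ) (hg : IntegrableOn g s μ) (hlt : ∀ t ∈ s, f t < g t) :
    ∫ t in s, f t ∂μ < ∫ t in s, g t ∂μ := by
  have hpos : 0 < ∫ t in s, (g t - f t) ∂μ :=
    setIntegral_pos_of_forall_pos hs hμs (hg.sub hf) fun t ht => sub_pos.2 (hlt t ht)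
  rw [integral_sub hg hf] at hpos
  exact sub_pos.1 hpos

section StrictMonoRatio

variable {α : Type*} [Preorder α] {f g : α → ℝ} {x t : α}

theorem lt_of_strictMono_div_of_le (hg : ∀ t, 0 < g t) (hmono : StrictMono fun x => f x / g x)
    (hx : f x ≤ g x) (ht : t < x) : f t < g t :=
  (div_lt_one (hg t)).1 ((hmono ht).trans_le ((div_le_one (hg x)).2 hx))

theorem lt_of_strictMono_div_of_lt (hg : ∀ t, 0 < g t) (hmono : StrictMono fun x => f x / g x)
    (hx : g x < f x) (ht : x < t) : g t < f t :=
  (one_lt_div (hg t)).1 (((one_lt_div (hg x)).2 hx).trans (hmono ht))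

end StrictMonoRatio

theorem integral_Iic_lt_of_strictMono_div {f g : ℝ → ℝ} (hf : Integrable f) (hg : Integrable g)
    (hg_pos : ∀ t, 0 < g t) (hfg : ∫ t, f t = ∫ t, g t) (hmono : StrictMono fun x => f x / g x)
    (x : ℝ) :
    ∫ t in Iic x, f t < ∫ t in Iic x, g t := by
  rcases le_or_gt (f x) (g x) with hx | hx
  · rw [integral_Iic_eq_integral_Iio, integral_Iic_eq_integral_Iio]
    exact setIntegral_lt_setIntegral_of_forall_lt measurableSet_Iio (by simp)
      hf.integrableOn hg.integrableOn fun t ht => lt_of_strictMono_div_of_le hg_pos hmono hx ht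
  · have hIoi : ∫ t in Ioi x, g t < ∫ t in Ioi x, f t :=
      setIntegral_lt_setIntegral_of_forall_lt measurableSet_Ioi (by simp)
        hg.integrableOn hf.integrableOn fun t ht => lt_of_strictMono_div_of_lt hg_pos hmono hx ht
    have hf_split := integral_add_compl (measurableSet_Iic (a := x)) hf
    have hg_split := integral_add_compl (measurableSet_Iic (a := x)) hg
    rw [compl_Iic] at hf_split hg_split
    linarith

theorem mlrp_implies_fosd_general
    (f g : ℝ → ℝ)
    (hg_pos : ∀ x, 0 < g x)
    (hf_int : Integrable f) (hg_int : Integrable g)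
    (hf_one : ∫ x, f x = 1) (hg_one : ∫ x, g x = 1)
    (hmlrp : StrictMono (fun x => f x / g x)) :
    (∀ x : ℝ, ∫ t in Set.Iic x, f t ≤ ∫ t in Set.Iic x, g t) ∧
    (∃ x : ℝ, ∫ t in Set.Iic x, f t < ∫ t in Set.Iic x, g t) := by
  have hlt := integral_Iic_lt_of_strictMono_div hf_int hg_int hg_pos (hf_one.trans hg_one.symm) hmlrp
  exact ⟨fun x => (hlt x).le, 0, hlt 0⟩

/-- Strict MLRP implies first-order stochastic dominance. -/
theorem mlrp_implies_fosd
    (f g : ℝ → ℝ)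
    (hf_meas : Measurable f) (hg_meas : Measurable g)
    (hf_pos : ∀ x, 0 < f x) (hg_pos : ∀ x, 0 < g x)
    (hf_int : Integrable f) (hg_int : Integrable g)
    (hf_one : ∫ x, f x = 1) (hg_one : ∫ x, g x = 1)
    (hmlrp : StrictMono (fun x => f x / g x)) :
    (∀ x : ℝ, ∫ t in Set.Iic x, f t ≤ ∫ t in Set.Iic x, g t) ∧
    (∃ x : ℝ, ∫ t in Set.Iic x, f t < ∫ t in Set.Iic x, g t) :=
  mlrp_implies_fosd_general f g hg_pos hf_int hg_int hf_one hg_one hmlrp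
end

section
/- If the density f strictly MLRPs the density g (f(x)/g(x) strictly increasing) and both distributions have finite means, then the mean under f is strictly greater than the mean under g: ∫ x·f(x) dx > ∫ x·g(x) dx. -/
/-!
Since `f / g` is strictly increasing and `∫ (f - g) = 0`, the difference `f - g` changes sign
exactly once, from negative to positive, at some point `c`. Hence `(x - c) * (f x - g x) > 0` for
all `x ≠ c`, and its integral is the difference of the means because `∫ c * (f - g) = 0`.
-/

open MeasureTheory

theorem integral_pos_of_ae_pos {α : Type*} [MeasurableSpace α] {μ : Measure α} [NeZero μ]
    {f : α → ℝ} (hfi : Integrable f μ) (hf : ∀ᵐ x ∂μ, 0 < f x) : 0 < ∫ x, f x ∂μ := by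
  rw [integral_pos_iff_support_of_nonneg_ae (hf.mono fun _ hx => hx.le) hfi]
  have hsupport : Function.support f =ᵐ[μ] (Set.univ : Set α) :=
    ae_eq_univ.2 <| measure_mono_null
      (fun _ hx => not_lt.2 (Function.notMem_support.1 hx).le) (ae_iff.1 hf)
  rw [measure_congr hsupport]
  exact Measure.measure_univ_pos.2 (NeZero.ne μ)

def StrictSingleCrossing (d : ℝ → ℝ) : Prop :=
  ∀ ⦃x y⦄, x < y → d y ≤ 0 → d x < 0

namespace StrictSingleCrossing

variable {μ : Measure ℝ} [NeZero μ] {d : ℝ → ℝ}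

theorem exists_crossing_point (hd : StrictSingleCrossing d) (hdi : Integrable d μ)
    (hd0 : ∫ x, d x ∂μ = 0) : ∃ c, ∀ x ≠ c, 0 < (x - c) * d x := by
  set S := {x | d x ≤ 0}
  have hS : S.Nonempty := by
    by_contra hS
    have hpos : ∀ x, 0 < d x := fun x => not_le.1 fun hx => hS ⟨x, hx⟩
    exact (integral_pos_of_ae_pos hdi (ae_of_all _ hpos)).ne' hd0
  have hSbdd : BddAbove S := by
    by_contra hunbdd
    have hneg : ∀ x, 0 < -d x := fun x => by
      obtain ⟨y, hyS, hxy⟩ := not_bddAbove_iff.1 hunbdd x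
      exact neg_pos.2 (hd hxy hyS)
    have hpos : 0 < ∫ x, -d x ∂μ := integral_pos_of_ae_pos hdi.neg (ae_of_all _ hneg)
    rw [integral_neg, hd0, neg_zero] at hpos
    exact hpos.false
  refine ⟨sSup S, fun x hx => ?_⟩
  rcases hx.lt_or_gt with hlt | hgt
  · obtain ⟨y, hyS, hxy⟩ := exists_lt_of_lt_csSup hS hlt
    exact mul_pos_of_neg_of_neg (sub_neg.2 hlt) (hd hxy hyS)
  · exact mul_pos (sub_pos.2 hgt) (not_le.1 fun hx => (le_csSup hSbdd hx).not_gt hgt)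

theorem integral_mul_pos [NullSingletonClass μ] (hd : StrictSingleCrossing d)
    (hdi : Integrable d μ) (hd0 : ∫ x, d x ∂μ = 0) (hmom : Integrable (fun x => x * d x) μ) :
    0 < ∫ x, x * d x ∂μ := by
  obtain ⟨c, hc⟩ := hd.exists_crossing_point hdi hd0
  have hshift : ∫ x, x * d x ∂μ = ∫ x, (x - c) * d x ∂μ := by
    simp only [sub_mul]
    rw [integral_sub hmom (hdi.const_mul c), integral_const_mul, hd0, mul_zero, sub_zero]
  have hshift_int : Integrable (fun x => (x - c) * d x) μ := by
    simpa only [sub_mul, Pi.sub_def] using hmom.sub (hdi.const_mul c)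
  rw [hshift]
  refine integral_pos_of_ae_pos hshift_int ?_
  filter_upwards [compl_mem_ae_iff.2 (measure_singleton c)] with x hx using hc x hx

end StrictSingleCrossing

theorem strictSingleCrossing_sub_of_strictMono_div {f g : ℝ → ℝ} (hg : ∀ x, 0 < g x)
    (hfg : StrictMono fun x => f x / g x) : StrictSingleCrossing fun x => f x - g x := by
  intro x y hxy hy
  have hy' : f y / g y ≤ 1 := (div_le_one (hg y)).2 (sub_nonpos.1 hy)
  exact sub_neg.2 ((div_lt_one (hg x)).1 ((hfg hxy).trans_le hy'))

theorem mlrp_implies_greater_mean_general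
    (f g : ℝ → ℝ)
    (hg_pos : ∀ x, 0 < g x)
    (hf_int : Integrable f) (hg_int : Integrable g)
    (hf_one : ∫ x, f x = 1) (hg_one : ∫ x, g x = 1)
    (hmlrp : StrictMono (fun x => f x / g x))
    (hf_mom : Integrable (fun x => x * f x))
    (hg_mom : Integrable (fun x => x * g x)) :
    ∫ x, x * f x > ∫ x, x * g x := by
  have hmean_diff : 0 < ∫ x, x * (f x - g x) :=
    StrictSingleCrossing.integral_mul_pos
      (strictSingleCrossing_sub_of_strictMono_div hg_pos hmlrp) (hf_int.sub hg_int)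
      (by rw [integral_sub hf_int hg_int, hf_one, hg_one, sub_self])
      (by simpa only [mul_sub, Pi.sub_def] using hf_mom.sub hg_mom)
  have hsplit : ∫ x, x * (f x - g x) = (∫ x, x * f x) - ∫ x, x * g x := by
    simp only [mul_sub]
    exact integral_sub hf_mom hg_mom
  linarith

/-- Strict MLRP implies strictly greater mean. -/
theorem mlrp_implies_greater_mean
    (f g : ℝ → ℝ)
    (hf_meas : Measurable f) (hg_meas : Measurable g)
    (hf_pos : ∀ x, 0 < f x) (hg_pos : ∀ x, 0 < g x)
    (hf_int : Integrable f) (hg_int : Integrable g)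
    (hf_one : ∫ x, f x = 1) (hg_one : ∫ x, g x = 1)
    (hmlrp : StrictMono (fun x => f x / g x))
    (hf_mom : Integrable (fun x => x * f x))
    (hg_mom : Integrable (fun x => x * g x)) :
    ∫ x, x * f x > ∫ x, x * g x :=
  mlrp_implies_greater_mean_general f g hg_pos hf_int hg_int hf_one hg_one hmlrp hf_mom hg_mom
end

section
/- Suppose F, F̃ ∈ ℝᵈ (d ≥ 3) have all entries nonzero with F₀, F̃₀ > 0, and Ψ, Ψ̃ are diagonal nonnegative d×d matrices, such that F Fᵀ + Ψ = F̃ F̃ᵀ + Ψ̃ as matrices. Then F = F̃ and Ψ = Ψ̃. -/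
/-!
Off the diagonal the two decompositions agree: `F i * F j = F' i * F' j` for `i ≠ j`. With a
third index `k`, the triangle of products gives
`F i ^ 2 * (F j * F k) = (F i * F j) * (F i * F k) = F' i ^ 2 * (F' j * F' k)`, and
`F j * F k = F' j * F' k ≠ 0`, so `F i ^ 2 = F' i ^ 2`. The sign normalisation at index `0` fixes
`F 0 = F' 0`, cancelling it in `F 0 * F i = F' 0 * F' i` gives `F = F'`, and then the diagonal
entries force `Ψ = Ψ'`.
-/

theorem sq_eq_sq_of_mul_eq_mul {M : Type*} [CommMonoidWithZero M] [IsCancelMulZero M]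
    {a b c a' b' c' : M} (hab : a * b = a' * b') (hac : a * c = a' * c')
    (hbc : b * c = b' * c') (hbc0 : b * c ≠ 0) : a ^ 2 = a' ^ 2 := by
  refine mul_right_cancel₀ hbc0 ?_
  calc a ^ 2 * (b * c) = (a * b) * (a * c) := by rw [sq, mul_mul_mul_comm]
    _ = a' ^ 2 * (b' * c') := by rw [hab, hac, sq, mul_mul_mul_comm]
    _ = a' ^ 2 * (b * c) := by rw [hbc]

theorem Fintype.exists_ne_ne_of_three_le_card {ι : Type*} [Fintype ι] [DecidableEq ι]
    (h3 : 3 ≤ Fintype.card ι) (i : ι) : ∃ j k, i ≠ j ∧ i ≠ k ∧ j ≠ k := by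
  have hcard : 1 < (Finset.univ.erase i).card := by
    rw [Finset.card_erase_of_mem (Finset.mem_univ i), Finset.card_univ]
    omega
  obtain ⟨j, k, hj, hk, hjk⟩ := Finset.one_lt_card_iff.mp hcard
  exact ⟨j, k, (Finset.ne_of_mem_erase hj).symm, (Finset.ne_of_mem_erase hk).symm, hjk⟩

section OffDiagonal

variable {ι R : Type*} [Fintype ι] {F F' : ι → R}

theorem sq_eq_sq_of_offDiag_mul_eq [CommMonoidWithZero R] [IsCancelMulZero R]
    (h3 : 3 ≤ Fintype.card ι) (hF : ∀ i, F i ≠ 0)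
    (hoff : ∀ i j, i ≠ j → F i * F j = F' i * F' j) (i : ι) : F i ^ 2 = F' i ^ 2 := by
  classical
  obtain ⟨j, k, hij, hik, hjk⟩ := Fintype.exists_ne_ne_of_three_le_card h3 i
  exact sq_eq_sq_of_mul_eq_mul (hoff i j hij) (hoff i k hik) (hoff j k hjk)
    (mul_ne_zero (hF j) (hF k))

theorem eq_of_offDiag_mul_eq [CommRing R] [LinearOrder R] [IsStrictOrderedRing R]
    (h3 : 3 ≤ Fintype.card ι) (hF : ∀ i, F i ≠ 0)
    (hoff : ∀ i j, i ≠ j → F i * F j = F' i * F' j)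
    {i₀ : ι} (hF₀ : 0 < F i₀) (hF'₀ : 0 < F' i₀) : F = F' := by
  have h₀ : F i₀ = F' i₀ :=
    (sq_eq_sq₀ hF₀.le hF'₀.le).mp (sq_eq_sq_of_offDiag_mul_eq h3 hF hoff i₀)
  funext i
  rcases eq_or_ne i₀ i with rfl | hi
  · exact h₀
  · have h := hoff i₀ i hi
    rw [h₀] at h
    exact mul_left_cancel₀ hF'₀.ne' h

end OffDiagonal

/-- Identifiability of the factor analysis covariance decomposition FFᵀ + Ψ. -/
theorem factor_analysis_identified
    (d : ℕ) (hd : 3 ≤ d)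
    (F F' : Fin d → ℝ)
    (hF : ∀ i, F i ≠ 0)
    (hF0 : 0 < F ⟨0, by omega⟩) (hF'0 : 0 < F' ⟨0, by omega⟩)
    (Ψ Ψ' : Matrix (Fin d) (Fin d) ℝ)
    (hΨdiag : ∀ i j, i ≠ j → Ψ i j = 0) (hΨ'diag : ∀ i j, i ≠ j → Ψ' i j = 0)
    (heq : ∀ i j, F i * F j + Ψ i j = F' i * F' j + Ψ' i j) :
    F = F' ∧ Ψ = Ψ' := by
  have hoff : ∀ i j, i ≠ j → F i * F j = F' i * F' j := fun i j hij => by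
    simpa [hΨdiag i j hij, hΨ'diag i j hij] using heq i j
  have hFF' : F = F' := eq_of_offDiag_mul_eq (by simpa using hd) hF hoff hF0 hF'0
  refine ⟨hFF', ?_⟩
  ext i j
  rcases eq_or_ne i j with rfl | hij
  · simpa [hFF'] using heq i i
  · rw [hΨdiag i j hij, hΨ'diag i j hij]
end

section
/- Let p be a strictly positive probability density on ℝ with finite mean, and F a CDF with 0 < F(z) < 1 for all z. Then the conditional mean given the event, (∫ z p(z) F(z) dz)/(∫ p(z) F(z) dz), is strictly greater than the unconditional mean ∫ z p(z) dz, whenever F is strictly increasing. -/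
open MeasureTheory

/-- Conditioning on a visit (with probability strictly increasing in severity)
strictly increases the mean severity. -/
theorem conditional_mean_gt_unconditional
    (p F : ℝ → ℝ)
    (hp_pos : ∀ z, 0 < p z) (hp_int : Integrable p) (hp_one : ∫ z, p z = 1)
    (hp_mom : Integrable (fun z => |z| * p z))
    (hF_range : ∀ z, 0 < F z ∧ F z < 1)
    (hF_mono : StrictMono F)
    (h1 : Integrable (fun z => z * p z * F z))
    (h2 : Integrable (fun z => p z * F z))
    (hz : Integrable (fun z => z * p z))
    (hden : 0 < ∫ z, p z * F z) :
    (∫ z, z * p z * F z) / (∫ z, p z * F z) > ∫ z, z * p z := by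
  set μ : Measure (ℝ × ℝ) := (volume : Measure ℝ).prod volume with hμ
  set G : ℝ × ℝ → ℝ := fun w => (w.1 - w.2) * (F w.1 - F w.2) * (p w.1 * p w.2) with hG
  -- the four product terms
  have i1 : Integrable (fun w : ℝ × ℝ => (w.1 * p w.1 * F w.1) * (p w.2)) μ :=
    h1.mul_prod hp_int
  have i2 : Integrable (fun w : ℝ × ℝ => (w.1 * p w.1) * (p w.2 * F w.2)) μ :=
    hz.mul_prod h2
  have i3 : Integrable (fun w : ℝ × ℝ => (p w.1 * F w.1) * (w.2 * p w.2)) μ :=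
    h2.mul_prod hz
  have i4 : Integrable (fun w : ℝ × ℝ => (p w.1) * (w.2 * p w.2 * F w.2)) μ :=
    hp_int.mul_prod h1
  have hGeq : G = fun w : ℝ × ℝ =>
      (w.1 * p w.1 * F w.1) * (p w.2) - (w.1 * p w.1) * (p w.2 * F w.2)
      - (p w.1 * F w.1) * (w.2 * p w.2) + (p w.1) * (w.2 * p w.2 * F w.2) := by
    funext w; simp only [hG]; ring
  have hGint : Integrable G μ := by
    rw [hGeq]; exact ((i1.sub i2).sub i3).add i4
  have hGval : ∫ w, G w ∂μ =
      2 * ((∫ z, z * p z * F z) - (∫ z, z * p z) * (∫ z, p z * F z)) := by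
    have e1 := integral_prod_mul (μ := volume) (ν := volume) (fun z : ℝ => z * p z * F z) p
    have e2 := integral_prod_mul (μ := volume) (ν := volume) (fun z : ℝ => z * p z) (fun z => p z * F z)
    have e3 := integral_prod_mul (μ := volume) (ν := volume) (fun z : ℝ => p z * F z) (fun z => z * p z)
    have e4 := integral_prod_mul (μ := volume) (ν := volume) p (fun z : ℝ => z * p z * F z)
    have s12 := integral_sub i1 i2
    have s123 := integral_sub (i1.sub i2) i3
    have stot := integral_add ((i1.sub i2).sub i3) i4
    simp only [Pi.sub_apply] at s123 stot
    rw [← hμ] at e1 e2 e3 e4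
    rw [hGeq]
    beta_reduce
    rw [stot, s123, s12, e1, e2, e3, e4, hp_one]
    ring
  have hGnonneg : ∀ w, 0 ≤ G w := by
    intro w
    have hp2 : 0 < p w.1 * p w.2 := mul_pos (hp_pos _) (hp_pos _)
    rcases lt_trichotomy w.1 w.2 with h | h | h
    · have : 0 < (w.1 - w.2) * (F w.1 - F w.2) :=
        mul_pos_of_neg_of_neg (by linarith) (by linarith [hF_mono h])
      positivity
    · simp [hG, h]
    · have : 0 < (w.1 - w.2) * (F w.1 - F w.2) :=
        mul_pos (by linarith) (by linarith [hF_mono h])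
      positivity
  have hGpos : 0 < ∫ w, G w ∂μ := by
    rw [integral_pos_iff_support_of_nonneg (fun w => hGnonneg w) hGint]
    have hsub : (Set.Ioo (0:ℝ) 1) ×ˢ (Set.Ioo (1:ℝ) 2) ⊆ Function.support G := by
      rintro ⟨x, y⟩ ⟨hx, hy⟩
      have hxy : x < y := lt_trans hx.2 hy.1
      have hp2 : 0 < p x * p y := mul_pos (hp_pos _) (hp_pos _)
      have : 0 < (x - y) * (F x - F y) :=
        mul_pos_of_neg_of_neg (by linarith) (by linarith [hF_mono hxy])
      exact ne_of_gt (by positivity)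
    have : μ ((Set.Ioo (0:ℝ) 1) ×ˢ (Set.Ioo (1:ℝ) 2)) = 1 := by
      rw [hμ, Measure.prod_prod, Real.volume_Ioo, Real.volume_Ioo]
      norm_num
    calc (0 : ENNReal) < 1 := by norm_num
      _ = μ ((Set.Ioo (0:ℝ) 1) ×ˢ (Set.Ioo (1:ℝ) 2)) := this.symm
      _ ≤ μ (Function.support G) := measure_mono hsub
  have key : (∫ z, z * p z) * (∫ z, p z * F z) < ∫ z, z * p z * F z := by
    nlinarith [hGval ▸ hGpos]
  rw [gt_iff_lt, lt_div_iff₀ hden]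
  exact key
end

section
/- Let f, g be densities on ℝ with f strictly MLRP over g, and let L : ℝ → ℝ be strictly positive with ∫ f·L and ∫ g·L finite and positive. Define posterior densities f'(z) = f(z)L(z)/∫fL and g'(z) = g(z)L(z)/∫gL. Then ∫ z f'(z) dz > ∫ z g'(z) dz, assuming the first moments of f' and g' exist. -/
/-!
The common likelihood `L` cancels in the ratio of the two posteriors, so they inherit the strictly
increasing likelihood ratio of the priors. Two densities of equal mass with a strictly increasing
ratio cross exactly once, at some `c`: below `c` the first is smaller, above it larger. Hence
`(z - c) (f'(z) - g'(z)) ≥ 0`, with strict inequality on an interval, and integrating gives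
`∫ z f' - ∫ z g' = ∫ (z - c) (f' - g') > 0`, the `c`-term vanishing because the masses agree.
-/

open MeasureTheory Set

lemma integral_pos_of_nonneg_of_pos_on_Ioo {h : ℝ → ℝ} (h_nonneg : 0 ≤ h) (hi : Integrable h)
    {a b : ℝ} (hab : a < b) (h_pos : ∀ x ∈ Ioo a b, 0 < h x) : 0 < ∫ x, h x := by
  rw [integral_pos_iff_support_of_nonneg h_nonneg hi]
  calc (0 : ENNReal) < volume (Ioo a b) := by simp [Real.volume_Ioo, hab]
    _ ≤ volume (Function.support h) := measure_mono fun x hx => (h_pos x hx).ne'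

section SingleCrossing

variable {F G : ℝ → ℝ}

lemma exists_crossing_of_strictMono_div (hG_pos : ∀ x, 0 < G x)
    (hF_int : Integrable F) (hG_int : Integrable G) (h_mass : ∫ x, F x = ∫ x, G x)
    (hr : StrictMono fun x => F x / G x) :
    ∃ c, (∀ z < c, F z < G z) ∧ (∀ z, c < z → G z < F z) := by
  have lt_iff (z : ℝ) : F z / G z < 1 ↔ F z < G z := div_lt_one (hG_pos z)
  set S : Set ℝ := {z | F z / G z < 1}
  have hS_ne : S.Nonempty := by
    by_contra hS
    have hGF : ∀ z, G z ≤ F z := fun z => not_lt.mp fun h => hS ⟨z, (lt_iff z).mpr h⟩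
    have hGF_pos : ∀ z ∈ Ioo 1 2, 0 < F z - G z := fun z hz =>
      sub_pos.mpr <| (one_lt_div (hG_pos z)).mp <|
        (not_lt.mp fun h => hS ⟨0, h⟩).trans_lt (hr (by linarith [hz.1]))
    have := integral_pos_of_nonneg_of_pos_on_Ioo (fun z => sub_nonneg.mpr (hGF z))
      (hF_int.sub hG_int) one_lt_two hGF_pos
    rw [integral_sub hF_int hG_int, h_mass, sub_self] at this
    exact this.false
  have hS_bdd : BddAbove S := by
    by_contra hS
    have hFG : ∀ z, F z < G z := fun z => by
      obtain ⟨s, hs, hzs⟩ := not_bddAbove_iff.mp hS z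
      exact (lt_iff z).mp ((hr hzs).trans hs)
    have := integral_pos_of_nonneg_of_pos_on_Ioo (fun z => sub_nonneg.mpr (hFG z).le)
      (hG_int.sub hF_int) one_lt_two fun z _ => sub_pos.mpr (hFG z)
    rw [integral_sub hG_int hF_int, h_mass, sub_self] at this
    exact this.false
  refine ⟨sSup S, fun z hz => ?_, fun z hz => ?_⟩
  · obtain ⟨s, hs, hzs⟩ := exists_lt_of_lt_csSup hS_ne hz
    exact (lt_iff z).mp ((hr hzs).trans hs)
  · have hm : (sSup S + z) / 2 ∉ S := fun h => by
      linarith [le_csSup hS_bdd h]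
    exact (one_lt_div (hG_pos z)).mp <| (not_lt.mp hm).trans_lt (hr (by linarith))

theorem integral_mul_lt_integral_mul_of_strictMono_div (hG_pos : ∀ x, 0 < G x)
    (hF_int : Integrable F) (hG_int : Integrable G) (h_mass : ∫ x, F x = ∫ x, G x)
    (hr : StrictMono fun x => F x / G x)
    (hF_mom : Integrable fun z => z * F z) (hG_mom : Integrable fun z => z * G z) :
    ∫ z, z * G z < ∫ z, z * F z := by
  obtain ⟨c, h_below, h_above⟩ := exists_crossing_of_strictMono_div hG_pos hF_int hG_int h_mass hr
  let h : ℝ → ℝ := fun z => (z * F z - z * G z) - (c * F z - c * G z)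
  have h_eq (z : ℝ) : h z = (z - c) * (F z - G z) := by ring
  have h_nonneg : 0 ≤ h := fun z => by
    rw [h_eq]
    rcases lt_trichotomy z c with hz | rfl | hz
    · exact (mul_pos_of_neg_of_neg (sub_neg.mpr hz) (sub_neg.mpr (h_below z hz))).le
    · simp
    · exact (mul_pos (sub_pos.mpr hz) (sub_pos.mpr (h_above z hz))).le
  have hF_c := hF_int.const_mul c
  have hG_c := hG_int.const_mul c
  have h_mom : Integrable fun z => z * F z - z * G z := hF_mom.sub hG_mom
  have h_c : Integrable fun z => c * F z - c * G z := hF_c.sub hG_c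
  have h_pos : 0 < ∫ z, h z :=
    integral_pos_of_nonneg_of_pos_on_Ioo h_nonneg (h_mom.sub h_c) (sub_one_lt c) fun z hz => by
      rw [h_eq]
      exact mul_pos_of_neg_of_neg (sub_neg.mpr hz.2) (sub_neg.mpr (h_below z hz.2))
  rw [integral_sub h_mom h_c, integral_sub hF_mom hG_mom, integral_sub hF_c hG_c,
    integral_const_mul, integral_const_mul, h_mass] at h_pos
  linarith

end SingleCrossing

section Posterior

variable {f g L : ℝ → ℝ}

noncomputable def posterior (f L : ℝ → ℝ) (z : ℝ) : ℝ := f z * L z / ∫ x, f x * L x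

lemma integrable_posterior (hfL : Integrable fun x => f x * L x) :
    Integrable (posterior f L) :=
  hfL.div_const _

lemma integral_posterior (hfL : ∫ x, f x * L x ≠ 0) : ∫ z, posterior f L z = 1 := by
  unfold posterior
  rw [integral_div, div_self hfL]

lemma posterior_pos (hg_pos : ∀ x, 0 < g x) (hL_pos : ∀ x, 0 < L x)
    (hgL_pos : 0 < ∫ x, g x * L x) (z : ℝ) : 0 < posterior g L z :=
  div_pos (mul_pos (hg_pos z) (hL_pos z)) hgL_pos

lemma posterior_div_posterior {z : ℝ} (hg : g z ≠ 0) (hL : L z ≠ 0)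
    (hfL : ∫ x, f x * L x ≠ 0) (hgL : ∫ x, g x * L x ≠ 0) :
    posterior f L z / posterior g L z = f z / g z * ((∫ x, g x * L x) / ∫ x, f x * L x) := by
  unfold posterior
  field_simp

lemma StrictMono.div_posterior (hmlrp : StrictMono fun x => f x / g x)
    (hg_pos : ∀ x, 0 < g x) (hL_pos : ∀ x, 0 < L x)
    (hfL_pos : 0 < ∫ x, f x * L x) (hgL_pos : 0 < ∫ x, g x * L x) :
    StrictMono fun z => posterior f L z / posterior g L z := by
  simp_rw [posterior_div_posterior (hg_pos _).ne' (hL_pos _).ne' hfL_pos.ne' hgL_pos.ne']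
  exact hmlrp.mul_const (div_pos hgL_pos hfL_pos)

end Posterior

theorem posterior_mean_mlrp_general
    (f g L : ℝ → ℝ)
    (hg_pos : ∀ x, 0 < g x) (hL_pos : ∀ x, 0 < L x)
    (hmlrp : StrictMono (fun x => f x / g x))
    (hfL : Integrable (fun x => f x * L x))
    (hgL : Integrable (fun x => g x * L x))
    (hfL_pos : 0 < ∫ x, f x * L x) (hgL_pos : 0 < ∫ x, g x * L x)
    (hf_mom : Integrable (fun z => z * (f z * L z / ∫ x, f x * L x)))
    (hg_mom : Integrable (fun z => z * (g z * L z / ∫ x, g x * L x))) :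
    ∫ z, z * (f z * L z / ∫ x, f x * L x)
      > ∫ z, z * (g z * L z / ∫ x, g x * L x) :=
  integral_mul_lt_integral_mul_of_strictMono_div (F := posterior f L) (G := posterior g L)
    (posterior_pos hg_pos hL_pos hgL_pos) (integrable_posterior hfL) (integrable_posterior hgL)
    (by rw [integral_posterior hfL_pos.ne', integral_posterior hgL_pos.ne'])
    (hmlrp.div_posterior hg_pos hL_pos hfL_pos hgL_pos) hf_mom hg_mom

/-- MLRP-dominant prior yields strictly larger posterior mean under a shared
positive likelihood. -/
theorem posterior_mean_mlrp
    (f g L : ℝ → ℝ)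
    (hf_pos : ∀ x, 0 < f x) (hg_pos : ∀ x, 0 < g x) (hL_pos : ∀ x, 0 < L x)
    (hf_int : Integrable f) (hg_int : Integrable g)
    (hf_one : ∫ x, f x = 1) (hg_one : ∫ x, g x = 1)
    (hmlrp : StrictMono (fun x => f x / g x))
    (hfL : Integrable (fun x => f x * L x))
    (hgL : Integrable (fun x => g x * L x))
    (hfL_pos : 0 < ∫ x, f x * L x) (hgL_pos : 0 < ∫ x, g x * L x)
    (hf_mom : Integrable (fun z => z * (f z * L z / ∫ x, f x * L x)))
    (hg_mom : Integrable (fun z => z * (g z * L z / ∫ x, g x * L x))) :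
    ∫ z, z * (f z * L z / ∫ x, f x * L x)
      > ∫ z, z * (g z * L z / ∫ x, g x * L x) :=
  posterior_mean_mlrp_general f g L hg_pos hL_pos hmlrp hfL hgL hfL_pos hgL_pos hf_mom hg_mom
end
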